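/- arXiv:2504.05067 — 2 statements merged into one kernel-verified Lean document; each statement's English description precedes it below -/
import Mathlib

section
/- Let z, z̄ ∈ ℂ and let γ, γ̄ > 0 be real. Then ln(1 + |z|²/γ) ≥ ln(1 + |z̄|²/γ̄) − |z̄|²/γ̄ + 2·Re(z̄* · z)/γ̄ − (1/γ̄ − 1/(γ̄ + |z̄|²))·(|z|² + γ), with equality when z = z̄ and γ = γ̄. -/
/-!
The inequality is `log a - log b ≥ 1 - b / a` for `a = 1 + |z|²/γ`, `b = 1 + |z̄|²/γ̄`, together
with `Re(z̄* z) ≤ |z̄| |z|`. After these two steps the gap between `1 - b / a` and the right-hand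
side is the perfect square `(|z| (γ̄ + |z̄|²) - |z̄| (γ + |z|²))²` divided by the positive number
`γ̄ (γ + |z|²) (γ̄ + |z̄|²)`.
-/

open Real

lemma log_one_add_sq_div_tangent_le (s sb γ γbar : ℝ) (hγ : 0 < γ) (hγbar : 0 < γbar) :
    log (1 + sb ^ 2 / γbar) - sb ^ 2 / γbar + 2 * (sb * s) / γbar -
        (1 / γbar - 1 / (γbar + sb ^ 2)) * (s ^ 2 + γ) ≤ log (1 + s ^ 2 / γ) := by
  have hA : 0 < 1 + s ^ 2 / γ := by positivity
  have hB : 0 < 1 + sb ^ 2 / γbar := by positivity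
  have hlog : 1 - (1 + sb ^ 2 / γbar) / (1 + s ^ 2 / γ) ≤
      log (1 + s ^ 2 / γ) - log (1 + sb ^ 2 / γbar) := by
    have := one_sub_inv_le_log_of_pos (div_pos hA hB)
    rwa [inv_div, log_div hA.ne' hB.ne'] at this
  have hgap : 1 - (1 + sb ^ 2 / γbar) / (1 + s ^ 2 / γ) -
      (-(sb ^ 2 / γbar) + 2 * (sb * s) / γbar - (1 / γbar - 1 / (γbar + sb ^ 2)) * (s ^ 2 + γ)) =
      (s * (γbar + sb ^ 2) - sb * (γ + s ^ 2)) ^ 2 / (γbar * (γ + s ^ 2) * (γbar + sb ^ 2)) := by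
    field_simp
    ring
  have hsq : 0 ≤ (s * (γbar + sb ^ 2) - sb * (γ + s ^ 2)) ^ 2 /
      (γbar * (γ + s ^ 2) * (γbar + sb ^ 2)) := by positivity
  linarith

lemma log_one_add_sq_div_tangent_self (s γ : ℝ) (hγ : 0 < γ) :
    log (1 + s ^ 2 / γ) - s ^ 2 / γ + 2 * (s * s) / γ -
        (1 / γ - 1 / (γ + s ^ 2)) * (s ^ 2 + γ) = log (1 + s ^ 2 / γ) := by
  field_simp
  ring

lemma re_conj_mul_le_norm_mul (w z : ℂ) : ((starRingEnd ℂ w) * z).re ≤ ‖w‖ * ‖z‖ := by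
  simpa only [norm_mul, Complex.norm_conj] using Complex.re_le_norm (starRingEnd ℂ w * z)

lemma re_conj_mul_self (z : ℂ) : ((starRingEnd ℂ z) * z).re = ‖z‖ * ‖z‖ := by
  rw [Complex.conj_mul', ← sq]
  exact_mod_cast Complex.ofReal_re _

/-- Inequality (71) of the paper (scalar form, inequality (48) of Nasir–Tuan–Ngo–Duong):
the concave lower bound of `ln(1 + |z|²/γ)` around the point `(z̄, γ̄)`, with equality
at `z = z̄`, `γ = γ̄`. -/
theorem log_one_add_ratio_lower_bound (z zbar : ℂ) (γ γbar : ℝ)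
    (hγ : 0 < γ) (hγbar : 0 < γbar) :
    Real.log (1 + ‖z‖ ^ 2 / γ) ≥
        Real.log (1 + ‖zbar‖ ^ 2 / γbar) - ‖zbar‖ ^ 2 / γbar +
          2 * ((starRingEnd ℂ zbar) * z).re / γbar -
          (1 / γbar - 1 / (γbar + ‖zbar‖ ^ 2)) * (‖z‖ ^ 2 + γ) ∧
      (z = zbar → γ = γbar →
        Real.log (1 + ‖z‖ ^ 2 / γ) =
          Real.log (1 + ‖zbar‖ ^ 2 / γbar) - ‖zbar‖ ^ 2 / γbar +
            2 * ((starRingEnd ℂ zbar) * z).re / γbar -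
            (1 / γbar - 1 / (γbar + ‖zbar‖ ^ 2)) * (‖z‖ ^ 2 + γ)) := by
  refine ⟨?_, ?_⟩
  · have hre := re_conj_mul_le_norm_mul zbar z
    calc _ ≤ log (1 + ‖zbar‖ ^ 2 / γbar) - ‖zbar‖ ^ 2 / γbar + 2 * (‖zbar‖ * ‖z‖) / γbar -
            (1 / γbar - 1 / (γbar + ‖zbar‖ ^ 2)) * (‖z‖ ^ 2 + γ) := by gcongr
      _ ≤ _ := log_one_add_sq_div_tangent_le _ _ γ γbar hγ hγbar
  · rintro rfl rfl
    rw [re_conj_mul_self]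
    exact (log_one_add_sq_div_tangent_self _ _ hγ).symm
end

section
/- Let z₁,…,z_l ∈ ℂ and z̄₁,…,z̄_l ∈ ℂ. Then ln(1 + Σᵢ|zᵢ|²) ≥ ln(1 + Σᵢ|z̄ᵢ|²) − Σᵢ|z̄ᵢ|² + 2·Σᵢ Re(z̄ᵢ* · zᵢ) − (Σᵢ|z̄ᵢ|²)·(1 + Σᵢ|zᵢ|²)/(1 + Σᵢ|z̄ᵢ|²), with equality when zᵢ = z̄ᵢ for all i. -/
open Finset

/-!
With `A = 1 + Σ‖zᵢ‖²` and `B = 1 + Σ‖z̄ᵢ‖²`, concavity of `log` gives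
`log A - log B ≥ 1 - B / A`, and weighted AM-GM with weight `t = A / B` gives
`2 Re(z̄ᵢ* zᵢ) ≤ t ‖z̄ᵢ‖² + ‖zᵢ‖² / t`. Summing the latter, the two bounds add up to
the claim, because `Σ‖zᵢ‖² / t = 1 - t⁻¹ + Σ‖z̄ᵢ‖²`.
-/

lemma two_mul_re_conj_mul_le (w z : ℂ) {t : ℝ} (ht : 0 < t) :
    2 * (starRingEnd ℂ w * z).re ≤ t * ‖w‖ ^ 2 + ‖z‖ ^ 2 / t := by
  have hre : (starRingEnd ℂ w * z).re ≤ ‖w‖ * ‖z‖ := by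
    simpa only [norm_mul, Complex.norm_conj] using Complex.re_le_norm (starRingEnd ℂ w * z)
  have hamgm : 2 * ‖w‖ * ‖z‖ ≤ t * ‖w‖ ^ 2 + ‖z‖ ^ 2 / t := by
    rw [← sub_nonneg]
    have hsq : t * ‖w‖ ^ 2 + ‖z‖ ^ 2 / t - 2 * ‖w‖ * ‖z‖ = (t * ‖w‖ - ‖z‖) ^ 2 / t := by
      field_simp
      ring
    rw [hsq]
    positivity
  linarith

lemma two_mul_sum_re_conj_mul_le {ι : Type*} (s : Finset ι) (w z : ι → ℂ) {t : ℝ}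
    (ht : 0 < t) :
    2 * ∑ i ∈ s, (starRingEnd ℂ (w i) * z i).re ≤
      t * ∑ i ∈ s, ‖w i‖ ^ 2 + (∑ i ∈ s, ‖z i‖ ^ 2) / t := by
  rw [mul_sum, mul_sum, sum_div, ← sum_add_distrib]
  exact sum_le_sum fun i _ => two_mul_re_conj_mul_le (w i) (z i) ht

lemma sum_re_conj_mul_self {ι : Type*} (s : Finset ι) (z : ι → ℂ) :
    ∑ i ∈ s, (starRingEnd ℂ (z i) * z i).re = ∑ i ∈ s, ‖z i‖ ^ 2 := by
  refine sum_congr rfl fun i _ => ?_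
  rw [Complex.conj_mul', ← Complex.ofReal_pow, Complex.ofReal_re]

/-- Inequality (72) of the paper (Lemma 2 of Niu et al.): a global lower bound on
`ln(1 + Σᵢ |zᵢ|²)` around the fixed point `(z̄₁, …, z̄_l)`, with equality when
`zᵢ = z̄ᵢ` for all `i`. -/
theorem log_one_add_sum_sq_lower_bound (l : ℕ) (z zbar : Fin l → ℂ) :
    Real.log (1 + ∑ i, ‖z i‖ ^ 2) ≥
        Real.log (1 + ∑ i, ‖zbar i‖ ^ 2) - ∑ i, ‖zbar i‖ ^ 2 +
          2 * ∑ i, ((starRingEnd ℂ (zbar i)) * z i).re -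
          (∑ i, ‖zbar i‖ ^ 2) * (1 + ∑ i, ‖z i‖ ^ 2) /
            (1 + ∑ i, ‖zbar i‖ ^ 2) ∧
      (z = zbar →
        Real.log (1 + ∑ i, ‖z i‖ ^ 2) =
          Real.log (1 + ∑ i, ‖zbar i‖ ^ 2) - ∑ i, ‖zbar i‖ ^ 2 +
            2 * ∑ i, ((starRingEnd ℂ (zbar i)) * z i).re -
            (∑ i, ‖zbar i‖ ^ 2) * (1 + ∑ i, ‖z i‖ ^ 2) /
              (1 + ∑ i, ‖zbar i‖ ^ 2)) := by
  set S := ∑ i, ‖z i‖ ^ 2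
  set Sbar := ∑ i, ‖zbar i‖ ^ 2
  have hA : 0 < 1 + S := by positivity
  have hB : 0 < 1 + Sbar := by positivity
  refine ⟨?_, fun h => ?_⟩
  · have hT := two_mul_sum_re_conj_mul_le univ zbar z (div_pos hA hB)
    have hlog := Real.one_sub_inv_le_log_of_pos (div_pos hA hB)
    rw [Real.log_div hA.ne' hB.ne'] at hlog
    have hS : S / ((1 + S) / (1 + Sbar)) = 1 - ((1 + S) / (1 + Sbar))⁻¹ + Sbar := by
      field_simp
      ring
    have hSbar : (1 + S) / (1 + Sbar) * Sbar = Sbar * (1 + S) / (1 + Sbar) := by ring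
    linarith
  · subst h
    rw [sum_re_conj_mul_self, mul_div_assoc, div_self hB.ne', mul_one]
    ring
end
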